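/- Assume the CRK setup. Suppose that for each n = 0, 1, …, N−1 a family of functions z_n, δ_t z_n, z_{n+1}, δ_t z_{n+1}, z_{n,j}, δ_t z_{n,j}, δ_x z_{n,j}, δ_t δ_x z_{n,j}, δ_x δ_t z_{n,j} : [0,1] → ℝ^d (j = 1, …, r) satisfies all hypotheses (i)–(vii) of Theorem 3.4 (with skew-symmetric M, K, S continuously differentiable in its first argument, grid points x_n = x_0 + n Δx, Δt ≠ 0, Δx ≠ 0, invertible (ã_{jk}) and weights b̃_j satisfying the symplecticity condition), where the functions z_{n+1}, δ_t z_{n+1} produced on cell n coincide with the functions z_{n+1}, δ_t z_{n+1} of cell n+1, and assume periodicity: z_N(τ) = z_0(τ) and δ_t z_N(τ) = δ_t z_0(τ) for all τ ∈ [0,1]. Then the discrete global energy is conserved: Δx Σ_{n=0}^{N−1} Σ_{j=1}^r b̃_j E_{n,j}¹ = Δx Σ_{n=0}^{N−1} Σ_{j=1}^r b̃_j E_{n,j}⁰, where E_{n,j}^α = S(z_{n,j}(α), x_n + c̃_j Δx) − (1/2) z_{n,j}(α)ᵀ K δ_x z_{n,j}(α) for α ∈ {0,1}. -/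

import Mathlib

open scoped Matrix

noncomputable def dotCLM {d : ℕ} (g : Fin d → ℝ) : (Fin d → ℝ) →L[ℝ] ℝ :=
  ∑ i : Fin d, g i • (ContinuousLinearMap.proj i : (Fin d → ℝ) →L[ℝ] ℝ)

noncomputable def lag {s : ℕ} (c : Fin s → ℝ) (i : Fin s) (τ : ℝ) : ℝ :=
  (Lagrange.basis (Finset.univ : Finset (Fin s)) c i).eval τ

noncomputable def bw {s : ℕ} (c : Fin s → ℝ) (i : Fin s) : ℝ :=
  ∫ τ in (0:ℝ)..1, lag c i τ

noncomputable def Acrk {s : ℕ} (c : Fin s → ℝ) (τ σ : ℝ) : ℝ :=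
  ∑ i : Fin s, (1 / bw c i) * (∫ α in (0:ℝ)..τ, lag c i α) * lag c i σ

noncomputable def wavg {s : ℕ} (c : Fin s → ℝ) (i : Fin s) {G : Type*}
    [NormedAddCommGroup G] [NormedSpace ℝ G] (f : ℝ → G) : G :=
  (1 / bw c i) • ∫ τ in (0:ℝ)..1, lag c i τ • f τ

/-!
By (i) and (iii) every stage value `z_{n,j}` and `δ_x z_{n,j}` is, on `[0, 1]`, a collocation
polynomial in `τ` whose stage derivatives are the averages `⟨δ_t z_{n,j}⟩_i` and
`⟨δ_t δ_x z_{n,j}⟩_i`. Integrating the derivative of the stage energy along these polynomials, the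
`M`-term cancels by skew-symmetry and the energy of stage `(n, j)` changes by
`Δt/2 ∑_i b_i (⟨δ_t z⟩_i ⬝ K ⟨δ_x z⟩_i - ⟨z⟩_i ⬝ K ⟨δ_t δ_x z⟩_i)`. By (ii) and (v) each node
`z_n` is a collocation polynomial as well, and its stage derivatives `W_n` are well defined
because the primitives of the Lagrange basis are linearly independent. The symplecticity
condition then turns the weighted energy change of cell `n` into the difference, between its
two nodes, of the flux `Δt/2 ∑_i b_i W_{n,i} ⬝ K ⟨z_n⟩_i`; over the periodic grid these
differences telescope to zero.
-/
open Set Finset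

noncomputable def lagInt {s : ℕ} (c : Fin s → ℝ) (i : Fin s) (τ : ℝ) : ℝ :=
  ∫ α in (0:ℝ)..τ, lag c i α

section Lagrange

variable {s : ℕ} (c : Fin s → ℝ)

lemma continuous_lag (i : Fin s) : Continuous (lag c i) :=
  Polynomial.continuous _

lemma hasDerivAt_lagInt (i : Fin s) (τ : ℝ) : HasDerivAt (lagInt c i) (lag c i τ) τ :=
  ((continuous_lag c i).integral_hasStrictDerivAt 0 τ).hasDerivAt

lemma eq_zero_of_sum_mul_lagInt_eq_zero (hc : Function.Injective c) {v : Fin s → ℝ}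
    (h : ∀ τ ∈ Icc (0:ℝ) 1, ∑ i, v i * lagInt c i τ = 0) : v = 0 := by
  set p := Lagrange.interpolate univ c v
  have hp : ∀ τ, p.eval τ = ∑ i, v i * lag c i τ := fun τ => by
    simp [p, Lagrange.interpolate_apply, Polynomial.eval_finsetSum, lag]
  have hroot : Ioo (0:ℝ) 1 ⊆ {τ | p.IsRoot τ} := fun τ hτ => by
    have hderiv : HasDerivAt (fun t => ∑ i, v i * lagInt c i t) (p.eval τ) τ := by
      rw [hp]
      exact HasDerivAt.fun_sum fun i _ => (hasDerivAt_lagInt c i τ).const_mul (v i)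
    have hzero : (fun t => ∑ i, v i * lagInt c i t) =ᶠ[nhds τ] fun _ => 0 :=
      Filter.eventually_of_mem (Icc_mem_nhds hτ.1 hτ.2) h
    exact hderiv.unique ((hasDerivAt_const τ 0).congr_of_eventuallyEq hzero)
  have hp0 : p = 0 := p.eq_zero_of_infinite_isRoot ((Ioo_infinite zero_lt_one).mono hroot)
  funext i
  rw [Pi.zero_apply, ← Lagrange.eval_interpolate_at_node v hc.injOn (mem_univ i)]
  change p.eval (c i) = 0
  rw [hp0, Polynomial.eval_zero]

lemma eq_zero_of_sum_lagInt_smul_eq_zero {E : Type*} [AddCommGroup E] [Module ℝ E]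
    (hc : Function.Injective c) {v : Fin s → E}
    (h : ∀ τ ∈ Icc (0:ℝ) 1, ∑ i, lagInt c i τ • v i = 0) : v = 0 := by
  funext i
  refine (Module.forall_dual_apply_eq_zero_iff ℝ (v i)).1 fun φ => ?_
  refine congrFun (eq_zero_of_sum_mul_lagInt_eq_zero c hc (v := fun i => φ (v i))
    fun τ hτ => ?_) i
  simpa [map_sum, mul_comm] using congrArg φ (h τ hτ)

end Lagrange

section WeightedAverage

variable {s : ℕ} (c : Fin s → ℝ) (i : Fin s) {G G' : Type*} [NormedAddCommGroup G]
  [NormedSpace ℝ G] [NormedAddCommGroup G'] [NormedSpace ℝ G']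

lemma intervalIntegrable_lag_smul {f : ℝ → G} (hf : ContinuousOn f (Icc 0 1)) :
    IntervalIntegrable (fun τ => lag c i τ • f τ) MeasureTheory.volume 0 1 :=
  ((continuous_lag c i).continuousOn.smul hf).intervalIntegrable_of_Icc zero_le_one

lemma integral_lag_smul (hb : bw c i ≠ 0) (f : ℝ → G) :
    ∫ τ in (0:ℝ)..1, lag c i τ • f τ = bw c i • wavg c i f := by
  rw [wavg, smul_smul, mul_one_div_cancel hb, one_smul]

lemma wavg_congr {f g : ℝ → G} (h : EqOn f g (Icc 0 1)) : wavg c i f = wavg c i g := by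
  unfold wavg
  congr 1
  refine intervalIntegral.integral_congr fun τ hτ => ?_
  rw [Set.uIcc_of_le zero_le_one] at hτ
  simp only [h hτ]

lemma wavg_add {f g : ℝ → G} (hf : ContinuousOn f (Icc 0 1)) (hg : ContinuousOn g (Icc 0 1)) :
    wavg c i (fun τ => f τ + g τ) = wavg c i f + wavg c i g := by
  simp only [wavg, smul_add]
  rw [intervalIntegral.integral_add (intervalIntegrable_lag_smul c i hf)
    (intervalIntegrable_lag_smul c i hg), smul_add]

lemma wavg_const_smul (a : ℝ) (f : ℝ → G) :
    wavg c i (fun τ => a • f τ) = a • wavg c i f := by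
  simp only [wavg, smul_comm (lag c i _) a, intervalIntegral.integral_smul,
    smul_comm (1 / bw c i) a]

lemma wavg_finsetSum {ι : Type*} (t : Finset ι) {f : ι → ℝ → G}
    (hf : ∀ k ∈ t, ContinuousOn (f k) (Icc 0 1)) :
    wavg c i (fun τ => ∑ k ∈ t, f k τ) = ∑ k ∈ t, wavg c i (f k) := by
  simp only [wavg, Finset.smul_sum]
  rw [intervalIntegral.integral_finsetSum fun k hk => intervalIntegrable_lag_smul c i (hf k hk),
    Finset.smul_sum]

lemma wavg_add_smul_sum {ι : Type*} (t : Finset ι) {g : ℝ → G} {f : ι → ℝ → G} (a : ι → ℝ)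
    (Δx : ℝ) (hg : ContinuousOn g (Icc 0 1)) (hf : ∀ k ∈ t, ContinuousOn (f k) (Icc 0 1)) :
    wavg c i (fun τ => g τ + Δx • ∑ k ∈ t, a k • f k τ)
      = wavg c i g + Δx • ∑ k ∈ t, a k • wavg c i (f k) := by
  have hsum : ContinuousOn (fun τ => ∑ k ∈ t, a k • f k τ) (Icc 0 1) :=
    continuousOn_finsetSum t fun k hk => (hf k hk).const_smul (a k)
  rw [wavg_add c i hg (g := fun τ => Δx • ∑ k ∈ t, a k • f k τ) (hsum.const_smul Δx),
    wavg_const_smul,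
    wavg_finsetSum c i t (f := fun k τ => a k • f k τ) fun k hk => (hf k hk).const_smul (a k)]
  simp only [wavg_const_smul]

lemma wavg_comp_clm [CompleteSpace G] [CompleteSpace G'] (L : G →L[ℝ] G') {f : ℝ → G}
    (hf : ContinuousOn f (Icc 0 1)) :
    wavg c i (fun τ => L (f τ)) = L (wavg c i f) := by
  have hL : ∀ τ, lag c i τ • L (f τ) = L (lag c i τ • f τ) := fun τ => (map_smul L _ _).symm
  simp only [wavg, hL]
  rw [L.intervalIntegral_comp_comm (intervalIntegrable_lag_smul c i hf), map_smul]

lemma integral_Acrk_smul [CompleteSpace G] (hb : ∀ i, bw c i ≠ 0) {f : ℝ → G}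
    (hf : ContinuousOn f (Icc 0 1)) (τ : ℝ) :
    ∫ σ in (0:ℝ)..1, Acrk c τ σ • f σ = ∑ i, lagInt c i τ • wavg c i f := by
  have hAcrk : ∀ σ, Acrk c τ σ • f σ = ∑ i, (lagInt c i τ / bw c i) • (lag c i σ • f σ) := by
    intro σ
    simp only [Acrk, Finset.sum_smul, smul_smul, lagInt]
    congr! 2
    ring
  simp only [hAcrk]
  rw [intervalIntegral.integral_finsetSum
    (f := fun i σ => (lagInt c i τ / bw c i) • (lag c i σ • f σ)) fun i _ =>
      (intervalIntegrable_lag_smul c i hf).smul (lagInt c i τ / bw c i)]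
  refine Finset.sum_congr rfl fun i _ => ?_
  rw [intervalIntegral.integral_smul, integral_lag_smul c i (hb i), smul_smul,
    div_mul_cancel₀ _ (hb i)]

end WeightedAverage

section CollocationCurves

variable {s : ℕ} (c : Fin s → ℝ) (Δt : ℝ) {E : Type*}

noncomputable def collocationPath [AddCommGroup E] [Module ℝ E] (x : E) (W : Fin s → E)
    (τ : ℝ) : E :=
  x + Δt • ∑ i, lagInt c i τ • W i

noncomputable def collocationVel [AddCommGroup E] [Module ℝ E] (W : Fin s → E) (τ : ℝ) : E :=
  Δt • ∑ i, lag c i τ • W i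

/-- Pairs `(f, W)` such that `f` agrees on `[0, 1]` with the polynomial of degree `≤ s` whose
derivative at `c i` is `Δt • W i`; for a CRK stage, `W i` is the average `⟨δ_t f⟩_i`. -/
def collocationCurves [AddCommGroup E] [Module ℝ E] :
    Submodule ℝ ((ℝ → E) × (Fin s → E)) where
  carrier := {p | EqOn p.1 (collocationPath c Δt (p.1 0) p.2) (Icc 0 1)}
  zero_mem' := fun τ _ => by simp [collocationPath]
  add_mem' := by
    rintro ⟨f, W⟩ ⟨g, V⟩ hf hg τ hτ
    change f τ + g τ = collocationPath c Δt (f 0 + g 0) (W + V) τ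
    rw [show f τ = _ from hf hτ, show g τ = _ from hg hτ]
    simp only [collocationPath, Pi.add_apply, smul_add, Finset.sum_add_distrib]
    abel
  smul_mem' := by
    rintro a ⟨f, W⟩ hf τ hτ
    change a • f τ = collocationPath c Δt (a • f 0) (a • W) τ
    rw [show f τ = _ from hf hτ]
    simp only [collocationPath, Pi.smul_apply, smul_add, Finset.smul_sum, smul_comm a]

variable {c Δt}

section Module

variable [AddCommGroup E] [Module ℝ E]

lemma mem_collocationCurves_of_eqOn {f g : ℝ → E} {W : Fin s → E}
    (hf : (f, W) ∈ collocationCurves c Δt) (hfg : EqOn f g (Icc 0 1)) :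
    (g, W) ∈ collocationCurves c Δt := by
  have h0 : g 0 = f 0 := (hfg (left_mem_Icc.2 zero_le_one)).symm
  intro τ hτ
  simp only [← hfg hτ, h0]
  exact hf hτ

lemma eq_of_mem_collocationCurves (hc : Function.Injective c) (hΔt : Δt ≠ 0) {f : ℝ → E}
    {W V : Fin s → E} (hW : (f, W) ∈ collocationCurves c Δt)
    (hV : (f, V) ∈ collocationCurves c Δt) : W = V := by
  have hsub := sub_mem hW hV
  rw [Prod.mk_sub_mk, sub_self] at hsub
  refine sub_eq_zero.1 (eq_zero_of_sum_lagInt_smul_eq_zero c hc fun τ hτ => ?_)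
  have := hsub hτ
  simp only [collocationPath, Pi.zero_apply, zero_add] at this
  exact (smul_eq_zero.1 this.symm).resolve_left hΔt

lemma mem_collocationCurves_add_smul_sum {r : ℕ} {f h : ℝ → E} {g : Fin r → ℝ → E}
    {W : Fin s → E} {V : Fin r → Fin s → E} (a : Fin r → ℝ) (Δx : ℝ)
    (hf : (f, W) ∈ collocationCurves c Δt) (hg : ∀ k, (g k, V k) ∈ collocationCurves c Δt)
    (hh : EqOn h (fun τ => f τ + Δx • ∑ k, a k • g k τ) (Icc 0 1)) :
    (h, W + Δx • ∑ k, a k • V k) ∈ collocationCurves c Δt := by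
  have hmem := add_mem hf (Submodule.smul_mem _ Δx
    (Submodule.sum_mem _ (t := univ) fun k _ => Submodule.smul_mem _ (a k) (hg k)))
  have hpair : (f, W) + Δx • ∑ k, a k • (g k, V k)
      = (fun τ => f τ + Δx • ∑ k, a k • g k τ, W + Δx • ∑ k, a k • V k) := by
    ext <;> simp [Prod.fst_sum, Prod.snd_sum, Finset.sum_apply]
  rw [hpair] at hmem
  exact mem_collocationCurves_of_eqOn hmem fun τ hτ => (hh hτ).symm

lemma mem_collocationCurves_sub_smul_sum {r : ℕ} {f h : ℝ → E} {g : Fin r → ℝ → E}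
    {W : Fin s → E} {V : Fin r → Fin s → E} (a : Fin r → ℝ) (Δx : ℝ)
    (hf : (f, W) ∈ collocationCurves c Δt) (hg : ∀ k, (g k, V k) ∈ collocationCurves c Δt)
    (hh : EqOn f (fun τ => h τ + Δx • ∑ k, a k • g k τ) (Icc 0 1)) :
    (h, W - Δx • ∑ k, a k • V k) ∈ collocationCurves c Δt := by
  rw [sub_eq_add_neg, ← neg_smul]
  refine mem_collocationCurves_add_smul_sum a (-Δx) hf hg fun τ hτ => ?_
  simp [hh hτ]

lemma collocationVel_map {E' : Type*} [AddCommGroup E'] [Module ℝ E'] (L : E →ₗ[ℝ] E')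
    (W : Fin s → E) (τ : ℝ) :
    L (collocationVel c Δt W τ) = collocationVel c Δt (fun i => L (W i)) τ := by
  simp [collocationVel, map_sum, map_smul]

end Module

section Normed

variable [NormedAddCommGroup E] [NormedSpace ℝ E]

lemma hasDerivAt_collocationPath (x : E) (W : Fin s → E) (τ : ℝ) :
    HasDerivAt (collocationPath c Δt x W) (collocationVel c Δt W τ) τ :=
  ((HasDerivAt.fun_sum fun i _ => (hasDerivAt_lagInt c i τ).smul_const (W i)).const_smul
    Δt).const_add x

lemma continuous_collocationPath (x : E) (W : Fin s → E) :
    Continuous (collocationPath c Δt x W) :=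
  continuous_iff_continuousAt.2 fun τ => (hasDerivAt_collocationPath x W τ).continuousAt

lemma continuous_collocationVel (W : Fin s → E) : Continuous (collocationVel c Δt W) :=
  (continuous_finsetSum _ fun i _ => (continuous_lag c i).smul continuous_const).const_smul Δt

lemma continuousOn_of_mem_collocationCurves {f : ℝ → E} {W : Fin s → E}
    (hf : (f, W) ∈ collocationCurves c Δt) : ContinuousOn f (Icc 0 1) :=
  (continuous_collocationPath _ W).continuousOn.congr hf

lemma mem_collocationCurves_of_integral_Acrk [CompleteSpace E] (hb : ∀ i, bw c i ≠ 0)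
    {f g : ℝ → E} (hg : ContinuousOn g (Icc 0 1))
    (hf : ∀ τ ∈ Icc (0:ℝ) 1, f τ = f 0 + Δt • ∫ σ in (0:ℝ)..1, Acrk c τ σ • g σ) :
    (f, fun i => wavg c i g) ∈ collocationCurves c Δt := fun τ hτ => by
  change f τ = collocationPath c Δt (f 0) _ τ
  rw [hf τ hτ, integral_Acrk_smul c hb hg]
  rfl

end Normed

end CollocationCurves

section StageEnergy

open Matrix

variable {s d : ℕ} {c : Fin s → ℝ}

lemma dotCLM_apply (g w : Fin d → ℝ) : dotCLM g w = g ⬝ᵥ w := by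
  simp [dotCLM, dotProduct]

lemma HasDerivAt.dotProduct {ι : Type*} [Fintype ι] {u v : ℝ → ι → ℝ} {u' v' : ι → ℝ} {τ : ℝ}
    (hu : HasDerivAt u u' τ) (hv : HasDerivAt v v' τ) :
    HasDerivAt (fun t => u t ⬝ᵥ v t) (u' ⬝ᵥ v τ + u τ ⬝ᵥ v') τ := by
  unfold _root_.dotProduct
  exact (HasDerivAt.fun_sum fun m _ =>
    (hasDerivAt_pi.1 hu m).mul (hasDerivAt_pi.1 hv m)).congr_deriv Finset.sum_add_distrib

lemma HasDerivAt.matrix_mulVec {m n : Type*} [Fintype m] [Fintype n] (A : Matrix m n ℝ)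
    {u : ℝ → n → ℝ} {u' : n → ℝ} {τ : ℝ} (hu : HasDerivAt u u' τ) :
    HasDerivAt (fun t => A *ᵥ u t) (A *ᵥ u') τ :=
  (LinearMap.toContinuousLinearMap (mulVecLin A)).hasFDerivAt.comp_hasDerivAt τ hu

lemma ContinuousOn.matrix_mulVec {m n : Type*} [Fintype n] {A : ℝ → Matrix m n ℝ}
    {u : ℝ → n → ℝ} {t : Set ℝ} (hA : ContinuousOn A t) (hu : ContinuousOn u t) :
    ContinuousOn (fun τ => A τ *ᵥ u τ) t :=
  (continuous_fst.matrix_mulVec continuous_snd).comp_continuousOn (hA.prodMk hu)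

lemma dotProduct_mulVec_eq_neg {ι : Type*} [Fintype ι] {K : Matrix ι ι ℝ} (hK : Kᵀ = -K)
    (u v : ι → ℝ) : u ⬝ᵥ K *ᵥ v = -(v ⬝ᵥ K *ᵥ u) := by
  rw [dotProduct_mulVec, ← mulVec_transpose, hK, neg_mulVec, neg_dotProduct, dotProduct_comm]

lemma mulVec_dotProduct_self_eq_zero {ι : Type*} [Fintype ι] {M : Matrix ι ι ℝ}
    (hM : Mᵀ = -M) (v : ι → ℝ) : M *ᵥ v ⬝ᵥ v = 0 := by
  have h := dotProduct_mulVec_eq_neg hM v v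
  rw [dotProduct_comm] at h
  linarith

lemma wavg_mulVec {m n : Type*} [Fintype m] [Fintype n] (i : Fin s) (A : Matrix m n ℝ)
    {u : ℝ → n → ℝ} (hu : ContinuousOn u (Icc 0 1)) :
    wavg c i (fun τ => A *ᵥ u τ) = A *ᵥ wavg c i u :=
  wavg_comp_clm c i (LinearMap.toContinuousLinearMap (mulVecLin A)) hu

lemma integral_dotProduct_collocationVel (hb : ∀ i, bw c i ≠ 0) {u : ℝ → Fin d → ℝ}
    (hu : ContinuousOn u (Icc 0 1)) (Δt : ℝ) (F : Fin s → Fin d → ℝ) :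
    ∫ τ in (0:ℝ)..1, u τ ⬝ᵥ collocationVel c Δt F τ
      = Δt * ∑ i, bw c i * (wavg c i u ⬝ᵥ F i) := by
  have hpt : ∀ τ, u τ ⬝ᵥ collocationVel c Δt F τ
      = Δt * ∑ i, lag c i τ • dotCLM (F i) (u τ) := fun τ => by
    simp [collocationVel, dotProduct_comm (u τ), sum_dotProduct, dotCLM_apply]
  simp only [hpt]
  rw [intervalIntegral.integral_const_mul, intervalIntegral.integral_finsetSum fun i _ =>
    intervalIntegrable_lag_smul c i (f := fun τ => dotCLM (F i) (u τ))
      ((dotCLM (F i)).continuous.comp_continuousOn hu)]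
  congr 1
  refine Finset.sum_congr rfl fun i _ => ?_
  rw [integral_lag_smul c i (hb i), wavg_comp_clm c i _ hu, smul_eq_mul, dotCLM_apply,
    dotProduct_comm]

lemma sub_eq_integral_dotProduct_gradient {S : (Fin d → ℝ) → ℝ}
    {gradS : (Fin d → ℝ) → Fin d → ℝ} (hS : ∀ w, HasFDerivAt S (dotCLM (gradS w)) w)
    (hgrad : Continuous gradS) {φ φ' : ℝ → Fin d → ℝ} (hφ : ∀ τ, HasDerivAt φ (φ' τ) τ)
    (hφ' : Continuous φ') :
    S (φ 1) - S (φ 0) = ∫ τ in (0:ℝ)..1, gradS (φ τ) ⬝ᵥ φ' τ := by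
  have hφc : Continuous φ := continuous_iff_continuousAt.2 fun τ => (hφ τ).continuousAt
  have hint : IntervalIntegrable (fun τ => gradS (φ τ) ⬝ᵥ φ' τ) MeasureTheory.volume 0 1 :=
    ((hgrad.comp hφc).dotProduct hφ').intervalIntegrable 0 1
  refine (intervalIntegral.integral_eq_sub_of_hasDerivAt (f := fun τ => S (φ τ))
    (fun τ _ => ?_) hint).symm
  simpa only [dotCLM_apply, Function.comp_def] using (hS (φ τ)).comp_hasDerivAt τ (hφ τ)

lemma sub_eq_integral_dotProduct_mulVec (K : Matrix (Fin d) (Fin d) ℝ)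
    {φ φ' ψ ψ' : ℝ → Fin d → ℝ} (hφ : ∀ τ, HasDerivAt φ (φ' τ) τ)
    (hψ : ∀ τ, HasDerivAt ψ (ψ' τ) τ) (hφ' : Continuous φ') (hψ' : Continuous ψ') :
    φ 1 ⬝ᵥ K *ᵥ ψ 1 - φ 0 ⬝ᵥ K *ᵥ ψ 0
      = ∫ τ in (0:ℝ)..1, (φ' τ ⬝ᵥ K *ᵥ ψ τ + φ τ ⬝ᵥ K *ᵥ ψ' τ) := by
  have hφc : Continuous φ := continuous_iff_continuousAt.2 fun τ => (hφ τ).continuousAt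
  have hψc : Continuous ψ := continuous_iff_continuousAt.2 fun τ => (hψ τ).continuousAt
  refine (intervalIntegral.integral_eq_sub_of_hasDerivAt
    (fun τ _ => (hφ τ).dotProduct ((hψ τ).matrix_mulVec K)) ?_).symm
  exact ((hφ'.dotProduct (continuous_const.matrix_mulVec hψc)).add
    (hφc.dotProduct (continuous_const.matrix_mulVec hψ'))).intervalIntegrable 0 1

end StageEnergy

section StageEnergyChange

open Matrix

variable {s d : ℕ} {c : Fin s → ℝ} {Δt : ℝ} {z zt zx ztx : ℝ → Fin d → ℝ}

lemma potential_change (hb : ∀ i, bw c i ≠ 0) {M K : Matrix (Fin d) (Fin d) ℝ} (hM : Mᵀ = -M)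
    {S : (Fin d → ℝ) → ℝ} {gradS : (Fin d → ℝ) → Fin d → ℝ}
    (hS : ∀ w, HasFDerivAt S (dotCLM (gradS w)) w) (hgrad : Continuous gradS)
    (hztc : ContinuousOn zt (Icc 0 1)) (hzxc : ContinuousOn zx (Icc 0 1))
    (hz : (z, fun i => wavg c i zt) ∈ collocationCurves c Δt)
    (heq : ∀ τ ∈ Icc (0:ℝ) 1, M *ᵥ zt τ + K *ᵥ zx τ = gradS (z τ)) :
    S (z 1) - S (z 0) = Δt * ∑ i, bw c i * (wavg c i zt ⬝ᵥ K *ᵥ wavg c i zx) := by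
  set F := fun i => wavg c i zt
  set φ := collocationPath c Δt (z 0) F
  have hzφ : EqOn z φ (Icc 0 1) := hz
  have hMzt : ContinuousOn (fun τ => M *ᵥ zt τ) (Icc 0 1) := continuousOn_const.matrix_mulVec hztc
  have hKzx : ContinuousOn (fun τ => K *ᵥ zx τ) (Icc 0 1) := continuousOn_const.matrix_mulVec hzxc
  calc S (z 1) - S (z 0) = ∫ τ in (0:ℝ)..1, gradS (φ τ) ⬝ᵥ collocationVel c Δt F τ := by
        rw [hzφ (left_mem_Icc.2 zero_le_one), hzφ (right_mem_Icc.2 zero_le_one)]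
        exact sub_eq_integral_dotProduct_gradient hS hgrad (hasDerivAt_collocationPath _ F)
          (continuous_collocationVel F)
    _ = ∫ τ in (0:ℝ)..1, (M *ᵥ zt τ + K *ᵥ zx τ) ⬝ᵥ collocationVel c Δt F τ := by
        refine intervalIntegral.integral_congr fun τ hτ => ?_
        rw [Set.uIcc_of_le zero_le_one] at hτ
        rw [← hzφ hτ, ← heq τ hτ]
    _ = Δt * ∑ i, bw c i * (F i ⬝ᵥ K *ᵥ wavg c i zx) := by
        rw [integral_dotProduct_collocationVel hb (u := fun τ => M *ᵥ zt τ + K *ᵥ zx τ)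
          (hMzt.add hKzx)]
        congr 1
        refine Finset.sum_congr rfl fun i _ => ?_
        rw [wavg_add c i hMzt hKzx, wavg_mulVec i M hztc, wavg_mulVec i K hzxc, add_dotProduct,
          mulVec_dotProduct_self_eq_zero hM, zero_add, dotProduct_comm]

lemma quadratic_change (hb : ∀ i, bw c i ≠ 0) (K : Matrix (Fin d) (Fin d) ℝ)
    (hz : (z, fun i => wavg c i zt) ∈ collocationCurves c Δt)
    (hzx : (zx, fun i => wavg c i ztx) ∈ collocationCurves c Δt) :
    z 1 ⬝ᵥ K *ᵥ zx 1 - z 0 ⬝ᵥ K *ᵥ zx 0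
      = Δt * ∑ i, bw c i * (wavg c i zt ⬝ᵥ K *ᵥ wavg c i zx)
        + Δt * ∑ i, bw c i * (wavg c i z ⬝ᵥ K *ᵥ wavg c i ztx) := by
  set F := fun i => wavg c i zt
  set H := fun i => wavg c i ztx
  set φ := collocationPath c Δt (z 0) F
  set ψ := collocationPath c Δt (zx 0) H
  have hzφ : EqOn z φ (Icc 0 1) := hz
  have hzxψ : EqOn zx ψ (Icc 0 1) := hzx
  have hφc : Continuous φ := continuous_collocationPath _ F
  have hψc : Continuous ψ := continuous_collocationPath _ H
  have hKψc : Continuous fun τ => K *ᵥ ψ τ := continuous_const.matrix_mulVec hψc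
  have h0 : (0:ℝ) ∈ Icc (0:ℝ) 1 := left_mem_Icc.2 zero_le_one
  have h1 : (1:ℝ) ∈ Icc (0:ℝ) 1 := right_mem_Icc.2 zero_le_one
  calc z 1 ⬝ᵥ K *ᵥ zx 1 - z 0 ⬝ᵥ K *ᵥ zx 0
      = ∫ τ in (0:ℝ)..1, (K *ᵥ ψ τ ⬝ᵥ collocationVel c Δt F τ
          + φ τ ⬝ᵥ collocationVel c Δt (fun i => K *ᵥ H i) τ) := by
        rw [hzφ h0, hzφ h1, hzxψ h0, hzxψ h1, sub_eq_integral_dotProduct_mulVec K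
          (hasDerivAt_collocationPath _ F) (hasDerivAt_collocationPath _ H)
          (continuous_collocationVel F) (continuous_collocationVel H)]
        congr! 2 with τ
        rw [dotProduct_comm]
        exact congrArg (_ + φ τ ⬝ᵥ ·) (collocationVel_map (mulVecLin K) H τ)
    _ = _ := by
        rw [intervalIntegral.integral_add
          ((hKψc.dotProduct (continuous_collocationVel F)).intervalIntegrable 0 1)
          ((hφc.dotProduct (continuous_collocationVel _)).intervalIntegrable 0 1),
          integral_dotProduct_collocationVel hb hKψc.continuousOn,
          integral_dotProduct_collocationVel hb hφc.continuousOn]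
        simp only [wavg_mulVec _ K hψc.continuousOn,
          ← wavg_congr c _ hzφ, ← wavg_congr c _ hzxψ, dotProduct_comm (K *ᵥ _)]
        rfl

theorem stage_energy_change (hb : ∀ i, bw c i ≠ 0) {M K : Matrix (Fin d) (Fin d) ℝ}
    (hM : Mᵀ = -M) {S : (Fin d → ℝ) → ℝ} {gradS : (Fin d → ℝ) → Fin d → ℝ}
    (hS : ∀ w, HasFDerivAt S (dotCLM (gradS w)) w) (hgrad : Continuous gradS)
    (hztc : ContinuousOn zt (Icc 0 1))
    (hz : (z, fun i => wavg c i zt) ∈ collocationCurves c Δt)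
    (hzx : (zx, fun i => wavg c i ztx) ∈ collocationCurves c Δt)
    (heq : ∀ τ ∈ Icc (0:ℝ) 1, M *ᵥ zt τ + K *ᵥ zx τ = gradS (z τ)) :
    (S (z 1) - 1/2 * (z 1 ⬝ᵥ K *ᵥ zx 1)) - (S (z 0) - 1/2 * (z 0 ⬝ᵥ K *ᵥ zx 0))
      = Δt / 2 * ∑ i, bw c i *
          (wavg c i zt ⬝ᵥ K *ᵥ wavg c i zx - wavg c i z ⬝ᵥ K *ᵥ wavg c i ztx) := by
  rw [show ∀ a b p q : ℝ, (a - 1/2 * p) - (b - 1/2 * q) = (a - b) - 1/2 * (p - q) by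
      intros; ring,
    potential_change hb hM hS hgrad hztc (continuousOn_of_mem_collocationCurves hzx) hz heq,
    quadratic_change hb K hz hzx]
  simp only [mul_sub, Finset.sum_sub_distrib]
  ring

end StageEnergyChange

section Symplectic

variable {R V : Type*} [CommRing R] [AddCommGroup V] [Module R V] {r : ℕ}

theorem symplectic_cell_identity (B : V →ₗ[R] V →ₗ[R] R) (hB : ∀ u v, B u v = -B v u)
    {b : Fin r → R} {a : Matrix (Fin r) (Fin r) R}
    (hsymp : ∀ j k, b j * b k - b j * a j k - b k * a k j = 0) (Δx : R)
    {F G H P : Fin r → V} {Q Q' W W' : V}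
    (hP : ∀ j, P j = Q + Δx • ∑ k, a j k • G k) (hF : ∀ j, F j = W + Δx • ∑ k, a j k • H k)
    (hQ' : Q' = Q + Δx • ∑ j, b j • G j) (hW' : W' = W + Δx • ∑ j, b j • H j) :
    Δx * ∑ j, b j * (B (F j) (G j) - B (P j) (H j)) = B W' Q' - B W Q := by
  set Γ := ∑ j, b j • G j
  set Λ := ∑ j, b j • H j
  have hexpand : ∀ j, b j * (B (F j) (G j) - B (P j) (H j)) = b j * B W (G j) - b j * B Q (H j)
      + Δx * ∑ k, b j * a j k * (B (H k) (G j) - B (G k) (H j)) := by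
    intro j
    simp only [hF, hP, map_add, map_smul, map_sum, LinearMap.add_apply, LinearMap.smul_apply,
      LinearMap.coe_sum, Finset.sum_apply, smul_eq_mul, mul_sub, Finset.sum_sub_distrib,
      ← Finset.mul_sum, mul_assoc]
    ring
  have hcross : ∑ j, ∑ k, b j * a j k * (B (H k) (G j) - B (G k) (H j)) = B Λ Γ := by
    have hswap : ∑ j, ∑ k, b j * a j k * B (G k) (H j)
        = -∑ j, ∑ k, b k * a k j * B (H k) (G j) := by
      rw [Finset.sum_comm]
      simp only [hB (G _) (H _), mul_neg, Finset.sum_neg_distrib]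
    have hpair : ∀ j k, b j * a j k * B (H k) (G j) + b k * a k j * B (H k) (G j)
        = b k * (b j * B (H k) (G j)) := fun j k => by
          linear_combination (-B (H k) (G j)) * hsymp j k
    simp only [mul_sub, Finset.sum_sub_distrib, hswap, sub_neg_eq_add, ← Finset.sum_add_distrib,
      hpair]
    simp only [Γ, Λ, map_sum, map_smul, LinearMap.coe_sum, Finset.sum_apply,
      LinearMap.smul_apply, smul_eq_mul, Finset.mul_sum]
    exact Finset.sum_congr rfl fun j _ => Finset.sum_congr rfl fun k _ => mul_left_comm _ _ _
  have hsum : ∑ j, b j * (B (F j) (G j) - B (P j) (H j)) = B W Γ - B Q Λ + Δx * B Λ Γ := by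
    simp only [hexpand, Finset.sum_add_distrib, Finset.sum_sub_distrib, ← Finset.mul_sum, hcross]
    simp only [Γ, Λ, map_sum, map_smul, smul_eq_mul]
  rw [hsum, hQ', hW']
  simp only [map_add, map_smul, LinearMap.add_apply, LinearMap.smul_apply, smul_eq_mul, hB Λ Q]
  ring

end Symplectic

section Cell

open Matrix

variable {s d r : ℕ} {c : Fin s → ℝ}

theorem cell_energy_flux (hc : Function.Injective c) (hb : ∀ i, bw c i ≠ 0)
    {M K : Matrix (Fin d) (Fin d) ℝ} (hM : Mᵀ = -M) (hK : Kᵀ = -K)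
    {S : (Fin d → ℝ) → ℝ → ℝ} {gradS : (Fin d → ℝ) → ℝ → Fin d → ℝ}
    (hS : ∀ (x : ℝ) (w : Fin d → ℝ), HasFDerivAt (fun w' => S w' x) (dotCLM (gradS w x)) w)
    (hSc : ∀ x : ℝ, Continuous fun w => gradS w x) {Δt : ℝ} (hΔt : Δt ≠ 0) (Δx : ℝ)
    {b : Fin r → ℝ} {a : Matrix (Fin r) (Fin r) ℝ}
    (hsymp : ∀ j k, b j * b k - b j * a j k - b k * a k j = 0) (x : Fin r → ℝ)
    {u u' : ℝ → Fin d → ℝ} {W W' : Fin s → Fin d → ℝ}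
    (hu : (u, W) ∈ collocationCurves c Δt) (hu' : (u', W') ∈ collocationCurves c Δt)
    {z zt zx ztx : Fin r → ℝ → Fin d → ℝ} (hztc : ∀ j, ContinuousOn (zt j) (Icc 0 1))
    (hz : ∀ j, (z j, fun i => wavg c i (zt j)) ∈ collocationCurves c Δt)
    (hzx : ∀ j, (zx j, fun i => wavg c i (ztx j)) ∈ collocationCurves c Δt)
    (hstage : ∀ j, EqOn (z j) (fun τ => u τ + Δx • ∑ k, a j k • zx k τ) (Icc 0 1))
    (hnext : EqOn u' (fun τ => u τ + Δx • ∑ j, b j • zx j τ) (Icc 0 1))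
    (heq : ∀ j, ∀ τ ∈ Icc (0:ℝ) 1, M *ᵥ zt j τ + K *ᵥ zx j τ = gradS (z j τ) (x j)) :
    Δx * ∑ j, b j * ((S (z j 1) (x j) - 1/2 * (z j 1 ⬝ᵥ K *ᵥ zx j 1))
        - (S (z j 0) (x j) - 1/2 * (z j 0 ⬝ᵥ K *ᵥ zx j 0)))
      = Δt / 2 * ∑ i, bw c i * (W' i ⬝ᵥ K *ᵥ wavg c i u' - W i ⬝ᵥ K *ᵥ wavg c i u) := by
  set F := fun j i => wavg c i (zt j)
  set H := fun j i => wavg c i (ztx j)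
  have hzxc : ∀ j, ContinuousOn (zx j) (Icc 0 1) := fun j =>
    continuousOn_of_mem_collocationCurves (hzx j)
  have huc : ContinuousOn u (Icc 0 1) := continuousOn_of_mem_collocationCurves hu
  have hF : ∀ j, F j = W + Δx • ∑ k, a j k • H k := fun j => by
    rw [eq_of_mem_collocationCurves hc hΔt hu
      (mem_collocationCurves_sub_smul_sum (a j) Δx (hz j) hzx (hstage j)), sub_add_cancel]
  have hW' : W' = W + Δx • ∑ j, b j • H j := eq_of_mem_collocationCurves hc hΔt hu'
    (mem_collocationCurves_add_smul_sum b Δx hu hzx hnext)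
  have hP : ∀ j i, wavg c i (z j) = wavg c i u + Δx • ∑ k, a j k • wavg c i (zx k) := fun j i => by
    rw [wavg_congr c i (hstage j), wavg_add_smul_sum c i univ (a j) Δx huc fun k _ => hzxc k]
  have hQ' : ∀ i, wavg c i u' = wavg c i u + Δx • ∑ j, b j • wavg c i (zx j) := fun i => by
    rw [wavg_congr c i hnext, wavg_add_smul_sum c i univ b Δx huc fun k _ => hzxc k]
  calc _ = Δx * ∑ j, b j * (Δt / 2 * ∑ i, bw c i *
          (F j i ⬝ᵥ K *ᵥ wavg c i (zx j) - wavg c i (z j) ⬝ᵥ K *ᵥ H j i)) := by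
        congr! 3 with j
        exact stage_energy_change hb hM (hS (x j)) (hSc (x j)) (hztc j) (hz j) (hzx j) (heq j)
    _ = Δt / 2 * ∑ i, bw c i * (Δx * ∑ j, b j *
          (F j i ⬝ᵥ K *ᵥ wavg c i (zx j) - wavg c i (z j) ⬝ᵥ K *ᵥ H j i)) := by
        simp only [Finset.mul_sum]
        rw [Finset.sum_comm]
        congr! 2
        ring
    _ = _ := by
        refine congrArg (Δt / 2 * ·) (Finset.sum_congr rfl fun i _ => congrArg (bw c i * ·) ?_)
        have hFi : ∀ j, F j i = W i + Δx • ∑ k, a j k • H k i := fun j => by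
          simp [hF j, Finset.sum_apply]
        have hW'i : W' i = W i + Δx • ∑ j, b j • H j i := by simp [hW', Finset.sum_apply]
        have hKskew : ∀ u v : Fin d → ℝ, toLinearMap₂' ℝ K u v = -toLinearMap₂' ℝ K v u := by
          simpa only [toLinearMap₂'_apply'] using dotProduct_mulVec_eq_neg hK
        simpa only [toLinearMap₂'_apply'] using symplectic_cell_identity (toLinearMap₂' ℝ K)
          hKskew hsymp Δx (fun j => hP j i) hFi (hQ' i) hW'i

end Cell

lemma Fin.sum_succ_sub_castSucc {G : Type*} [AddCommGroup G] {N : ℕ} (f : Fin (N + 1) → G) :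
    ∑ n : Fin N, (f n.succ - f n.castSucc) = f (Fin.last N) - f 0 := by
  rw [Finset.sum_sub_distrib, eq_sub_of_add_eq' (Fin.sum_univ_succ f).symm,
    eq_sub_of_add_eq (Fin.sum_univ_castSucc f).symm]
  abel

theorem stmt14_general {s d r N : ℕ} (c : Fin s → ℝ) (hc : Function.Injective c)
    (hb : ∀ i, bw c i ≠ 0)
    (M K : Matrix (Fin d) (Fin d) ℝ) (hM : Mᵀ = -M) (hK : Kᵀ = -K)
    (S : (Fin d → ℝ) → ℝ → ℝ) (gradS : (Fin d → ℝ) → ℝ → (Fin d → ℝ))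
    (hS : ∀ (x : ℝ) (w : Fin d → ℝ), HasFDerivAt (fun w' => S w' x) (dotCLM (gradS w x)) w)
    (hSc : ∀ x : ℝ, Continuous fun w => gradS w x)
    (Δt Δx : ℝ) (hΔt : Δt ≠ 0)
    (x0 : ℝ) (ct bt : Fin r → ℝ) (a : Matrix (Fin r) (Fin r) ℝ)
    (hsymp : ∀ j k, bt j * bt k - bt j * a j k - bt k * a k j = 0)
    (znode : Fin (N+1) → ℝ → (Fin d → ℝ))
    (z δtz δxz δtδxz : Fin N → Fin r → ℝ → (Fin d → ℝ))
    (hδtzc : ∀ n j, ContinuousOn (δtz n j) (Set.Icc 0 1))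
    (hδtδxzc : ∀ n j, ContinuousOn (δtδxz n j) (Set.Icc 0 1))
    (h1 : ∀ n j, ∀ τ ∈ Set.Icc (0:ℝ) 1,
      z n j τ = z n j 0 + Δt • ∫ σ in (0:ℝ)..1, Acrk c τ σ • δtz n j σ)
    (h2 : ∀ n j, ∀ τ ∈ Set.Icc (0:ℝ) 1,
      z n j τ = znode n.castSucc τ + Δx • ∑ k, a j k • δxz n k τ)
    (h3 : ∀ n j, ∀ τ ∈ Set.Icc (0:ℝ) 1,
      δxz n j τ = δxz n j 0 + Δt • ∫ σ in (0:ℝ)..1, Acrk c τ σ • δtδxz n j σ)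
    (h5 : ∀ n, ∀ τ ∈ Set.Icc (0:ℝ) 1,
      znode n.succ τ = znode n.castSucc τ + Δx • ∑ j, bt j • δxz n j τ)
    (h7 : ∀ n j, ∀ τ ∈ Set.Icc (0:ℝ) 1,
      M.mulVec (δtz n j τ) + K.mulVec (δxz n j τ)
        = gradS (z n j τ) (x0 + (n : ℕ) * Δx + ct j * Δx))
    (hper : znode (Fin.last N) = znode 0)
    (E0 E1 : Fin N → Fin r → ℝ)
    (hE0 : ∀ n j, E0 n j = S (z n j 0) (x0 + (n : ℕ) * Δx + ct j * Δx)
        - (1/2) * dotProduct (z n j 0) (K.mulVec (δxz n j 0)))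
    (hE1 : ∀ n j, E1 n j = S (z n j 1) (x0 + (n : ℕ) * Δx + ct j * Δx)
        - (1/2) * dotProduct (z n j 1) (K.mulVec (δxz n j 1))) :
    Δx * ∑ n, ∑ j, bt j * E1 n j = Δx * ∑ n, ∑ j, bt j * E0 n j := by
  rcases isEmpty_or_nonempty (Fin r) with hr | ⟨⟨j₀⟩⟩
  · simp
  rcases N.eq_zero_or_pos with rfl | hN
  · simp
  have : NeZero N := ⟨hN.ne'⟩
  have hz : ∀ n j, (z n j, fun i => wavg c i (δtz n j)) ∈ collocationCurves c Δt := fun n j =>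
    mem_collocationCurves_of_integral_Acrk hb (hδtzc n j) (h1 n j)
  have hzx : ∀ n j, (δxz n j, fun i => wavg c i (δtδxz n j)) ∈ collocationCurves c Δt :=
    fun n j => mem_collocationCurves_of_integral_Acrk hb (hδtδxzc n j) (h3 n j)
  have hleft : ∀ n : Fin N, ∃ W, (znode n.castSucc, W) ∈ collocationCurves c Δt := fun n =>
    ⟨_, mem_collocationCurves_sub_smul_sum (a j₀) Δx (hz n j₀) (hzx n) fun τ hτ => h2 n j₀ τ hτ⟩
  -- by periodicity the last node is also the left node of a cell
  have hnode : ∀ m, ∃ W, (znode m, W) ∈ collocationCurves c Δt :=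
    Fin.lastCases (by rw [hper, ← Fin.castSucc_zero]; exact hleft 0) hleft
  choose W hW using hnode
  have hWper : W (Fin.last N) = W 0 :=
    eq_of_mem_collocationCurves hc hΔt (hper ▸ hW (Fin.last N)) (hW 0)
  set Y : Fin (N + 1) → ℝ := fun m => Δt / 2 * ∑ i, bw c i * (W m i ⬝ᵥ K *ᵥ wavg c i (znode m))
  have hcell : ∀ n : Fin N, Δx * ∑ j, bt j * (E1 n j - E0 n j) = Y n.succ - Y n.castSucc :=
    fun n => by
      simp only [hE0, hE1, Y, ← mul_sub, ← Finset.sum_sub_distrib]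
      exact cell_energy_flux hc hb hM hK hS hSc hΔt Δx hsymp _ (hW _) (hW _) (hδtzc n) (hz n)
        (hzx n) (fun j τ hτ => h2 n j τ hτ) (fun τ hτ => h5 n τ hτ) (h7 n)
  have htotal : Δx * ∑ n, ∑ j, bt j * E1 n j - Δx * ∑ n, ∑ j, bt j * E0 n j
      = ∑ n : Fin N, (Y n.succ - Y n.castSucc) := by
    simp only [← hcell, mul_sub, Finset.sum_sub_distrib, Finset.mul_sum]
  rw [← sub_eq_zero, htotal, Fin.sum_succ_sub_castSucc]
  simp only [Y, hWper, hper, sub_self]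

theorem stmt14 {s d r N : ℕ} (hs : 1 ≤ s) (c : Fin s → ℝ) (hc : Function.Injective c)
    (hb : ∀ i, bw c i ≠ 0)
    (M K : Matrix (Fin d) (Fin d) ℝ) (hM : Mᵀ = -M) (hK : Kᵀ = -K)
    (S : (Fin d → ℝ) → ℝ → ℝ) (gradS : (Fin d → ℝ) → ℝ → (Fin d → ℝ))
    (hS : ∀ (x : ℝ) (w : Fin d → ℝ), HasFDerivAt (fun w' => S w' x) (dotCLM (gradS w x)) w)
    (hSc : ∀ x : ℝ, Continuous fun w => gradS w x)
    (Δt Δx : ℝ) (hΔt : Δt ≠ 0) (hΔx : Δx ≠ 0)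
    (x0 : ℝ) (ct bt : Fin r → ℝ) (a : Matrix (Fin r) (Fin r) ℝ) (ha : IsUnit a)
    (hsymp : ∀ j k, bt j * bt k - bt j * a j k - bt k * a k j = 0)
    (znode δtznode : Fin (N+1) → ℝ → (Fin d → ℝ))
    (z δtz δxz δtδxz δxδtz : Fin N → Fin r → ℝ → (Fin d → ℝ))
    (hznodec : ∀ n, ContinuousOn (znode n) (Set.Icc 0 1))
    (hδtznodec : ∀ n, ContinuousOn (δtznode n) (Set.Icc 0 1))
    (hzc : ∀ n j, ContinuousOn (z n j) (Set.Icc 0 1))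
    (hδtzc : ∀ n j, ContinuousOn (δtz n j) (Set.Icc 0 1))
    (hδxzc : ∀ n j, ContinuousOn (δxz n j) (Set.Icc 0 1))
    (hδtδxzc : ∀ n j, ContinuousOn (δtδxz n j) (Set.Icc 0 1))
    (hδxδtzc : ∀ n j, ContinuousOn (δxδtz n j) (Set.Icc 0 1))
    (h1 : ∀ n j, ∀ τ ∈ Set.Icc (0:ℝ) 1,
      z n j τ = z n j 0 + Δt • ∫ σ in (0:ℝ)..1, Acrk c τ σ • δtz n j σ)
    (h2 : ∀ n j, ∀ τ ∈ Set.Icc (0:ℝ) 1,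
      z n j τ = znode n.castSucc τ + Δx • ∑ k, a j k • δxz n k τ)
    (h3 : ∀ n j, ∀ τ ∈ Set.Icc (0:ℝ) 1,
      δxz n j τ = δxz n j 0 + Δt • ∫ σ in (0:ℝ)..1, Acrk c τ σ • δtδxz n j σ)
    (h4 : ∀ n j, ∀ τ ∈ Set.Icc (0:ℝ) 1,
      δtz n j τ = δtznode n.castSucc τ + Δx • ∑ k, a j k • δxδtz n k τ)
    (h5 : ∀ n, ∀ τ ∈ Set.Icc (0:ℝ) 1,
      znode n.succ τ = znode n.castSucc τ + Δx • ∑ j, bt j • δxz n j τ)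
    (h6 : ∀ n, ∀ τ ∈ Set.Icc (0:ℝ) 1,
      δtznode n.succ τ = δtznode n.castSucc τ + Δx • ∑ j, bt j • δxδtz n j τ)
    (h7 : ∀ n j, ∀ τ ∈ Set.Icc (0:ℝ) 1,
      M.mulVec (δtz n j τ) + K.mulVec (δxz n j τ)
        = gradS (z n j τ) (x0 + (n : ℕ) * Δx + ct j * Δx))
    (hper : znode (Fin.last N) = znode 0)
    (hper' : δtznode (Fin.last N) = δtznode 0)
    (E0 E1 : Fin N → Fin r → ℝ)
    (hE0 : ∀ n j, E0 n j = S (z n j 0) (x0 + (n : ℕ) * Δx + ct j * Δx)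
        - (1/2) * dotProduct (z n j 0) (K.mulVec (δxz n j 0)))
    (hE1 : ∀ n j, E1 n j = S (z n j 1) (x0 + (n : ℕ) * Δx + ct j * Δx)
        - (1/2) * dotProduct (z n j 1) (K.mulVec (δxz n j 1))) :
    Δx * ∑ n, ∑ j, bt j * E1 n j = Δx * ∑ n, ∑ j, bt j * E0 n j :=
  stmt14_general c hc hb M K hM hK S gradS hS hSc Δt Δx hΔt x0 ct bt a hsymp znode z δtz δxz δtδxz
    hδtzc hδtδxzc h1 h2 h3 h5 h7 hper E0 E1 hE0 hE1
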